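/- Define V(v) = -λ₀ v - c·log(1-v) + log v + S*, where S* = (λ₀-c+1)/2 + (c/2)·log(c/λ₀) - (1/2)·log(1/λ₀), for c > 1 and λ₀ ∈ ((1-√c)², (1+√c)²). Then at the points v± = (λ₀-c+1)/(2λ₀) ± iπρ(λ₀) (which lie on the circle |v| = λ₀^{-1/2}), the real part of V vanishes: Re V(v±) = 0. -/

import Mathlib

open Real

/-- The real part of the phase function `V` vanishes at the saddle points `v±`. -/
theorem re_V_vanishes_at_saddle (c l₀ : ℝ) (hc : 1 < c)
    (hl : l₀ ∈ Set.Ioo ((1 - Real.sqrt c) ^ 2) ((1 + Real.sqrt c) ^ 2))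
    (ρ : ℝ)
    (hρ : ρ = (1 / (2 * π * l₀)) *
        Real.sqrt (((1 + Real.sqrt c) ^ 2 - l₀) * (l₀ - (1 - Real.sqrt c) ^ 2)))
    (S : ℝ)
    (hS : S = (l₀ - c + 1) / 2 + (c / 2) * Real.log (c / l₀) - (1 / 2) * Real.log (1 / l₀))
    (v : ℂ)
    (hv : v = (((l₀ - c + 1) / (2 * l₀) : ℝ) : ℂ) + ((π * ρ : ℝ) : ℂ) * Complex.I ∨
          v = (((l₀ - c + 1) / (2 * l₀) : ℝ) : ℂ) - ((π * ρ : ℝ) : ℂ) * Complex.I)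
    (hcut1 : v.im ≠ 0 ∨ 0 < v.re) (hcut2 : (1 - v).im ≠ 0 ∨ 0 < (1 - v).re) :
    (-(l₀ : ℂ) * v - (c : ℂ) * Complex.log (1 - v) + Complex.log v + (S : ℂ)).re = 0 := by
  have hc0 : (0:ℝ) < c := by linarith
  have hl0 : 0 < l₀ := lt_of_le_of_lt (sq_nonneg _) hl.1
  have hsc : Real.sqrt c ^ 2 = c := Real.sq_sqrt hc0.le
  have hP1 : 0 < (1 + Real.sqrt c)^2 - l₀ := by linarith [hl.2]
  have hP2 : 0 < l₀ - (1 - Real.sqrt c)^2 := by linarith [hl.1]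
  have hπ : (0:ℝ) < π := Real.pi_pos
  have hb2 : (π * ρ)^2 = ((1+Real.sqrt c)^2 - l₀) * (l₀ - (1-Real.sqrt c)^2) / (4 * l₀^2) := by
    rw [hρ, mul_pow, mul_pow, div_pow, Real.sq_sqrt (by positivity)]
    field_simp
    ring
  set a : ℝ := (l₀ - c + 1) / (2 * l₀) with ha
  have him2 : (π*ρ)^2 + a^2 = 1 / l₀ := by
    rw [hb2, ha]
    field_simp
    linear_combination (8+8*l₀-4*(Real.sqrt c^2+c)) * hsc
  have him2' : (π*ρ)^2 + (1-a)^2 = c / l₀ := by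
    rw [hb2, ha]
    field_simp
    linear_combination (8+8*l₀-4*(Real.sqrt c^2+c)) * hsc
  have hre : v.re = a := by rcases hv with h | h <;> simp [h]
  have hIm : v.im ^ 2 = (π*ρ)^2 := by rcases hv with h | h <;> simp [h] <;> ring
  have habv : ‖v‖ ^ 2 = 1 / l₀ := by
    rw [Complex.sq_norm, Complex.normSq_apply, ← him2, hre]
    linear_combination hIm
  have habv' : ‖1 - v‖ ^ 2 = c / l₀ := by
    rw [Complex.sq_norm, Complex.normSq_apply]
    simp only [Complex.sub_re, Complex.sub_im, Complex.one_re, Complex.one_im, hre]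
    linear_combination hIm + him2'
  have hlog1 : Real.log ‖v‖ = (1/2) * Real.log (1/l₀) := by
    have := congrArg Real.log habv
    rw [Real.log_pow] at this
    push_cast at this
    linarith
  have hlog2 : Real.log ‖1 - v‖ = (1/2) * Real.log (c/l₀) := by
    have := congrArg Real.log habv'
    rw [Real.log_pow] at this
    push_cast at this
    linarith
  simp only [Complex.add_re, Complex.sub_re, Complex.neg_re, Complex.mul_re,
    Complex.ofReal_re, Complex.ofReal_im, Complex.neg_im, Complex.log_re,
    hlog1, hlog2, hre]
  have : l₀ * a = (l₀ - c + 1) / 2 := by rw [ha]; field_simp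
  rw [hS]
  nlinarith [this]
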